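/- arXiv:1501.01913 — 4 statements merged into one kernel-verified Lean document; each statement's English description precedes it below -/
import Mathlib

section
/- Let 𝔉 be a clonable family of r-graphs. For every ε>0 there exists n0 such that for all integers n2 ≥ n1 ≥ n0, m(𝔉, n2) ≥ m(𝔉, n1) + (n2 − n1)·(r·m(𝔉) − ε)·n1^{r-1}. -/
/-!
Cloning a vertex `v` of an `n`-vertex member of `𝔉` adds `|link v|` edges per clone, and an
extremal member has a vertex with `n·|link v| ≥ r·m(𝔉,n)`. Hence `m(𝔉,n+k) ≥ m(𝔉,n) + k·d` for
some `d` with `n·d ≥ r·m(𝔉,n)`. For `k = 1` this says that `m(𝔉,n) / (n(n+1)⋯(n+r-1))` is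
nondecreasing; being bounded by `1`, it converges, so `m(𝔉,n)/n^r` converges to `m(𝔉)`. Then
`m(𝔉,n) ≥ (m(𝔉) - ε/r)·n^r` for large `n`, i.e. `d ≥ (r·m(𝔉) - ε)·n^{r-1}`.
-/

open Filter

namespace TuranGT

/-- An `r`-graph: an `r`-uniform hypergraph with vertex set `{0, ..., n-1} ⊆ ℕ`. -/
structure RGraph (r : ℕ) where
  n : ℕ
  edges : Finset (Finset ℕ)
  uniform : ∀ e ∈ edges, e.card = r
  valid : ∀ e ∈ edges, ∀ v ∈ e, v < n

variable {r : ℕ}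

/-- The link of a vertex `v`: the set of `(r-1)`-sets `I` with `I ∪ {v}` an edge. -/
def link (F : RGraph r) (v : ℕ) : Finset (Finset ℕ) :=
  (F.edges.filter fun e => v ∈ e).image fun e => e.erase v

/-- `G` contains a copy of `H` as a subgraph. -/
def ContainsCopy (G H : RGraph r) : Prop :=
  ∃ f : ℕ → ℕ, Set.InjOn f (Set.Iio H.n) ∧ (∀ v < H.n, f v < G.n) ∧
    ∀ e ∈ H.edges, e.image f ∈ G.edges

/-- `G` is `𝔉`-free: it contains no member of `𝔉` as a subgraph. -/
def FreeFam (𝔉 : Set (RGraph r)) (G : RGraph r) : Prop :=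
  ∀ H ∈ 𝔉, ¬ ContainsCopy G H

/-- The Turán number `ex(n, 𝔉)`. -/
noncomputable def exNum (r n : ℕ) (𝔉 : Set (RGraph r)) : ℕ :=
  sSup {k | ∃ G : RGraph r, G.n = n ∧ FreeFam 𝔉 G ∧ G.edges.card = k}

/-- `φ` witnesses that `G` is a blowup of `F`: fibers of `φ` form a blowup partition. -/
def IsBlowupMap (F G : RGraph r) (φ : ℕ → ℕ) : Prop :=
  (∀ v < G.n, φ v < F.n) ∧
    ∀ e : Finset ℕ, e ∈ G.edges ↔
      ((∀ v ∈ e, v < G.n) ∧ Set.InjOn φ (e : Set ℕ) ∧ e.image φ ∈ F.edges)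

/-- `G` is (isomorphic to) a blowup of `F` (cloning and deleting vertices). -/
def IsBlowup (F G : RGraph r) : Prop := ∃ φ : ℕ → ℕ, IsBlowupMap F G φ

/-- The family `𝔅(S)` of all blowups of `S`. -/
def blowupFam (S : RGraph r) : Set (RGraph r) := {G | IsBlowup S G}

/-- A family is clonable if it is closed under taking blowups. -/
def Clonable (𝔉 : Set (RGraph r)) : Prop :=
  ∀ F ∈ 𝔉, ∀ G : RGraph r, IsBlowup F G → G ∈ 𝔉

/-- `m(𝔉, n)`: maximum number of edges of an `n`-vertex member of `𝔉`. -/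
noncomputable def mFam (𝔉 : Set (RGraph r)) (n : ℕ) : ℕ :=
  sSup {k | ∃ F ∈ 𝔉, F.n = n ∧ F.edges.card = k}

/-- `m(𝔉) = lim_{n → ∞} m(𝔉, n)/n^r` (when the family is smooth). -/
noncomputable def mDen (𝔉 : Set (RGraph r)) : ℝ :=
  limUnder atTop fun n : ℕ => (mFam 𝔉 n : ℝ) / (n : ℝ) ^ r

/-- The edit distance `d_𝔥(F)` from `F` to the family `𝔥`. -/
noncomputable def distFam (𝔥 : Set (RGraph r)) (F : RGraph r) : ℝ :=
  sInf {x : ℝ | ∃ H ∈ 𝔥, H.n = F.n ∧ x = ((symmDiff F.edges H.edges).card : ℝ)}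

/-- `μ` is a probability distribution on the vertex set of `F`. -/
def IsWeight (F : RGraph r) (μ : ℕ → ℝ) : Prop :=
  (∀ v, 0 ≤ μ v) ∧ (∀ v, F.n ≤ v → μ v = 0) ∧ ∑ v ∈ Finset.range F.n, μ v = 1

/-- Weighted density `λ(F, μ)`. -/
noncomputable def lamW (F : RGraph r) (μ : ℕ → ℝ) : ℝ :=
  ∑ e ∈ F.edges, ∏ v ∈ e, μ v

/-- The Lagrangian `λ(F)`. -/
noncomputable def lagrangian (F : RGraph r) : ℝ :=
  sSup {x : ℝ | ∃ μ, IsWeight F μ ∧ x = lamW F μ}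

/-- `λ(𝔥)` for a family of r-graphs. -/
noncomputable def lamFam (𝔥 : Set (RGraph r)) : ℝ :=
  sSup {x : ℝ | ∃ H ∈ 𝔥, ∃ μ, IsWeight H μ ∧ x = lamW H μ}

/-- The uniform distribution `ξ_F`. -/
noncomputable def uniformW (F : RGraph r) : ℕ → ℝ :=
  fun v => if v < F.n then ((F.n : ℝ))⁻¹ else 0

/-- `(G, ν)` is a blowup of the weighted graph `(F, μ)`. -/
def WIsBlowup (F : RGraph r) (μ : ℕ → ℝ) (G : RGraph r) (ν : ℕ → ℝ) : Prop :=
  IsWeight G ν ∧ ∃ φ : ℕ → ℕ, IsBlowupMap F G φ ∧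
    ∀ i < F.n, μ i = ∑ v ∈ (Finset.range G.n).filter (fun v => φ v = i), ν v

/-- `d'(F1, F2, μ)` for graphs on a common vertex set. -/
noncomputable def dPrime (E1 E2 : Finset (Finset ℕ)) (μ : ℕ → ℝ) : ℝ :=
  ∑ e ∈ symmDiff E1 E2, ∏ v ∈ e, μ v

/-- The distance between weighted `r`-graphs. -/
noncomputable def wDist (F1 : RGraph r) (μ1 : ℕ → ℝ) (F2 : RGraph r) (μ2 : ℕ → ℝ) : ℝ :=
  sInf {x : ℝ | ∃ (G1 G2 : RGraph r) (ν : ℕ → ℝ), G1.n = G2.n ∧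
    WIsBlowup F1 μ1 G1 ν ∧ WIsBlowup F2 μ2 G2 ν ∧ x = dPrime G1.edges G2.edges ν}

/-- The weighted distance `d^w_𝔥(F, μ)` from a weighted graph to a family. -/
noncomputable def wDistFam (𝔥 : Set (RGraph r)) (F : RGraph r) (μ : ℕ → ℝ) : ℝ :=
  sInf {x : ℝ | ∃ H ∈ 𝔥, ∃ ν, IsWeight H ν ∧ x = wDist F μ H ν}

/-- `𝔉` is `(𝔥, ε, α)`-locally stable. -/
def LocallyStable (𝔉 𝔥 : Set (RGraph r)) (ε α : ℝ) : Prop :=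
  ∃ n0 : ℕ, ∀ F ∈ 𝔉, n0 ≤ F.n → distFam 𝔥 F ≤ ε * (F.n : ℝ) ^ r →
    (F.edges.card : ℝ) ≤ (mFam 𝔥 F.n : ℝ) - α * distFam 𝔥 F

/-- `𝔉` is `𝔥`-locally stable. -/
def HLocallyStable (𝔉 𝔥 : Set (RGraph r)) : Prop :=
  ∃ ε > (0 : ℝ), ∃ α > (0 : ℝ), LocallyStable 𝔉 𝔥 ε α

/-- `𝔉` is `𝔥`-stable, i.e. `(𝔥, 1, α)`-locally stable for some `α > 0`. -/
def HStable (𝔉 𝔥 : Set (RGraph r)) : Prop :=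
  ∃ α > (0 : ℝ), LocallyStable 𝔉 𝔥 1 α

/-- `𝔉` is `(𝔥, ε, α)`-vertex locally stable. -/
def VertexLocallyStable (𝔉 𝔥 : Set (RGraph r)) (ε α : ℝ) : Prop :=
  ∃ n0 : ℕ, ∀ F ∈ 𝔉, n0 ≤ F.n → distFam 𝔥 F ≤ ε * (F.n : ℝ) ^ r →
    (∀ v < F.n, ((r : ℝ) * mDen 𝔥 - ε) * (F.n : ℝ) ^ (r - 1) ≤ ((link F v).card : ℝ)) →
    (F.edges.card : ℝ) ≤ (mFam 𝔥 F.n : ℝ) - α * distFam 𝔥 F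

/-- `𝔉` is `𝔥`-vertex locally stable. -/
def HVertexLocallyStable (𝔉 𝔥 : Set (RGraph r)) : Prop :=
  ∃ ε > (0 : ℝ), ∃ α > (0 : ℝ), VertexLocallyStable 𝔉 𝔥 ε α

/-- `𝔉` is `(𝔥, ε, α)`-weight locally stable. -/
def WeightLocallyStable (𝔉 𝔥 : Set (RGraph r)) (ε α : ℝ) : Prop :=
  ∀ F ∈ 𝔉, ∀ μ : ℕ → ℝ, IsWeight F μ → wDistFam 𝔥 F μ ≤ ε →
    lamW F μ ≤ lamFam 𝔥 - α * wDistFam 𝔥 F μ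

/-- `𝔉` is `𝔥`-weight locally stable. -/
def HWeightLocallyStable (𝔉 𝔥 : Set (RGraph r)) : Prop :=
  ∃ ε > (0 : ℝ), ∃ α > (0 : ℝ), WeightLocallyStable 𝔉 𝔥 ε α

/-- `𝔉` is `𝔥`-weight stable: `(𝔥, 1, α)`-weight locally stable for some `α > 0`. -/
def HWeightStable (𝔉 𝔥 : Set (RGraph r)) : Prop :=
  ∃ α > (0 : ℝ), WeightLocallyStable 𝔉 𝔥 1 α

/-- `𝔉` is `𝔥`-weakly weight stable. -/
def WeaklyWeightStable (𝔉 𝔥 : Set (RGraph r)) : Prop :=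
  ∀ ε > (0 : ℝ), ∃ δ > (0 : ℝ), ∀ F ∈ 𝔉, ∀ μ : ℕ → ℝ, IsWeight F μ →
    lamFam 𝔥 - δ ≤ lamW F μ → wDistFam 𝔥 F μ ≤ ε

/-- The generalized triangle `T_r` on vertex set `{0, ..., 2r-2}` (for `r ≥ 2`),
with edges `D1 = {0,...,r-1}`, `D2 = {0,...,r-2} ∪ {r}`, `D3 = {r-1, r, ..., 2r-2}`. -/
def genTriangle (r : ℕ) : RGraph r where
  n := 2 * r - 1
  edges :=
    if _h : 2 ≤ r then
      {Finset.range r, insert r (Finset.range (r - 1)), Finset.Ico (r - 1) (2 * r - 1)}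
    else ∅
  uniform := by
    intro e he
    split_ifs at he with h
    · simp only [Finset.mem_insert, Finset.mem_singleton] at he
      rcases he with rfl | rfl | rfl
      · exact Finset.card_range r
      · rw [Finset.card_insert_of_notMem (by simp only [Finset.mem_range]; omega),
          Finset.card_range]
        omega
      · rw [Nat.card_Ico]
        omega
    · simp at he
  valid := by
    intro e he v hv
    split_ifs at he with h
    · simp only [Finset.mem_insert, Finset.mem_singleton] at he
      rcases he with rfl | rfl | rfl
      · simp only [Finset.mem_range] at hv; omega
      · simp only [Finset.mem_insert, Finset.mem_range] at hv; omega
      · simp only [Finset.mem_Ico] at hv; omega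
    · simp at he

/-- The family `Σ_r`: all `r`-graphs with three edges `D1, D2, D3` such that
`|D1 ∩ D2| = r - 1` and `D1 △ D2 ⊆ D3`. -/
def SigmaFam (r : ℕ) : Set (RGraph r) :=
  {G | ∃ D1 D2 D3 : Finset ℕ, G.edges = {D1, D2, D3} ∧
    D1 ≠ D2 ∧ D1 ≠ D3 ∧ D2 ≠ D3 ∧
    (D1 ∩ D2).card = r - 1 ∧ symmDiff D1 D2 ⊆ D3}

/-- The complete graph `K_t` as a `2`-graph. -/
def completeGraph (t : ℕ) : RGraph 2 where
  n := t
  edges := Finset.powersetCard 2 (Finset.range t)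
  uniform := fun _e he => (Finset.mem_powersetCard.1 he).2
  valid := fun _e he v hv => Finset.mem_range.1 ((Finset.mem_powersetCard.1 he).1 hv)

/-- `S` is an `(m, r, r-1)` Steiner system: each `(r-1)`-subset of the vertex set
lies in exactly one edge. -/
def IsSteiner (m : ℕ) (S : RGraph r) : Prop :=
  S.n = m ∧ ∀ I : Finset ℕ, (∀ v ∈ I, v < S.n) → I.card = r - 1 →
    ∃! e, e ∈ S.edges ∧ I ⊆ e

/-- `F` covers pairs: every two vertices lie in a common edge. -/
def CoversPairs (F : RGraph r) : Prop :=
  ∀ u < F.n, ∀ v < F.n, ∃ e ∈ F.edges, u ∈ e ∧ v ∈ e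

/-- Isomorphism of `r`-graphs. -/
def Isomorphic (F G : RGraph r) : Prop :=
  F.n = G.n ∧ ∃ f : ℕ → ℕ, Set.InjOn f (Set.Iio F.n) ∧ (∀ v < F.n, f v < G.n) ∧
    ∀ e : Finset ℕ, e ∈ F.edges ↔ ((∀ v ∈ e, v < F.n) ∧ e.image f ∈ G.edges)

/-- The support of a weighting. -/
noncomputable def suppW (F : RGraph r) (μ : ℕ → ℝ) : Finset ℕ :=
  (Finset.range F.n).filter fun v => μ v ≠ 0

/-- `G` is isomorphic to the subgraph of `F` induced on the vertex set `S`. -/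
def IsIsoInduced (F : RGraph r) (S : Finset ℕ) (G : RGraph r) : Prop :=
  ∃ f : ℕ → ℕ, Set.InjOn f (Set.Iio G.n) ∧ (Finset.range G.n).image f = S ∧
    ∀ e : Finset ℕ, e ∈ G.edges ↔ ((∀ v ∈ e, v < G.n) ∧ e.image f ∈ F.edges)

/-- An `r`-graph is thin if every `(r-1)`-set lies in at most one edge. -/
def ThinG (F : RGraph r) : Prop :=
  ∀ I : Finset ℕ, I.card = r - 1 → ∀ e1 ∈ F.edges, ∀ e2 ∈ F.edges,
    I ⊆ e1 → I ⊆ e2 → e1 = e2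

/-- A Steiner system (or any graph) is balanced if its Lagrangian is attained by
the uniform distribution. -/
def Balanced (F : RGraph r) : Prop := lagrangian F = lamW F (uniformW F)

/-- `e(m, r) = C(m, r-1) / (r m^r)`. -/
noncomputable def eDen (m r : ℕ) : ℝ :=
  (m.choose (r - 1) : ℝ) / ((r : ℝ) * (m : ℝ) ^ r)

/-- `d(m, r) = C(m-1, r-2) / ((r-1) m^{r-1})`. -/
noncomputable def dDen (m r : ℕ) : ℝ :=
  ((m - 1).choose (r - 2) : ℝ) / (((r : ℝ) - 1) * (m : ℝ) ^ (r - 1))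

/-- `S` is uniquely dense around `Σ_r`: the uniform weighting of `S` strictly maximizes the
weighted density among weighted `Σ_r`-free `r`-graphs covering pairs. -/
def UniquelyDense (S : RGraph r) : Prop :=
  (∀ F : RGraph r, FreeFam (SigmaFam r) F → CoversPairs F → ∀ μ : ℕ → ℝ, IsWeight F μ →
    lamW F μ ≤ lamW S (uniformW S)) ∧
  ∀ F : RGraph r, FreeFam (SigmaFam r) F → CoversPairs F → ∀ μ : ℕ → ℝ, IsWeight F μ →
    lamW F μ = lamW S (uniformW S) → Isomorphic F S ∧ μ = uniformW F


open Topology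

lemma RGraph.card_edges_le_choose (F : RGraph r) : F.edges.card ≤ F.n.choose r :=
  calc F.edges.card ≤ ((Finset.range F.n).powersetCard r).card :=
        Finset.card_le_card fun e he => Finset.mem_powersetCard.2
          ⟨fun v hv => Finset.mem_range.2 (F.valid e he v hv), F.uniform e he⟩
    _ = F.n.choose r := by rw [Finset.card_powersetCard, Finset.card_range]

lemma bddAbove_card_edges (𝔉 : Set (RGraph r)) (n : ℕ) :
    BddAbove {k | ∃ F ∈ 𝔉, F.n = n ∧ F.edges.card = k} :=
  ⟨n.choose r, by rintro k ⟨F, -, rfl, rfl⟩; exact F.card_edges_le_choose⟩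

lemma card_edges_le_mFam {𝔉 : Set (RGraph r)} {F : RGraph r} (hF : F ∈ 𝔉) :
    F.edges.card ≤ mFam 𝔉 F.n :=
  le_csSup (bddAbove_card_edges 𝔉 F.n) ⟨F, hF, rfl, rfl⟩

lemma mFam_le_choose (𝔉 : Set (RGraph r)) (n : ℕ) : mFam 𝔉 n ≤ n.choose r :=
  csSup_le' (by rintro k ⟨F, -, rfl, rfl⟩; exact F.card_edges_le_choose)

lemma exists_card_edges_eq_mFam {𝔉 : Set (RGraph r)} {n : ℕ} (h : ∃ F ∈ 𝔉, F.n = n) :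
    ∃ F ∈ 𝔉, F.n = n ∧ F.edges.card = mFam 𝔉 n := by
  obtain ⟨F, hF, rfl⟩ := h
  have hne : {k | ∃ G ∈ 𝔉, G.n = F.n ∧ G.edges.card = k}.Nonempty := ⟨_, F, hF, rfl, rfl⟩
  exact Nat.sSup_mem hne (bddAbove_card_edges 𝔉 F.n)

lemma mFam_eq_zero {𝔉 : Set (RGraph r)} {n : ℕ} (h : ∀ F ∈ 𝔉, F.n ≠ n) : mFam 𝔉 n = 0 := by
  have hempty : {k | ∃ F ∈ 𝔉, F.n = n ∧ F.edges.card = k} = ∅ :=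
    Set.eq_empty_of_forall_notMem <| by rintro k ⟨F, hF, hFn, -⟩; exact h F hF hFn
  rw [mFam, hempty]
  exact csSup_empty

lemma mem_link_iff {F : RGraph r} {v : ℕ} {I : Finset ℕ} :
    I ∈ link F v ↔ v ∉ I ∧ insert v I ∈ F.edges := by
  simp only [link, Finset.mem_image, Finset.mem_filter]
  constructor
  · rintro ⟨e, ⟨he, hve⟩, rfl⟩
    exact ⟨Finset.notMem_erase v e, by rwa [Finset.insert_erase hve]⟩
  · rintro ⟨hvI, hI⟩
    exact ⟨_, ⟨hI, Finset.mem_insert_self v I⟩, Finset.erase_insert hvI⟩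

lemma link_mono {F G : RGraph r} (h : F.edges ⊆ G.edges) (v : ℕ) : link F v ⊆ link G v :=
  Finset.image_subset_image (Finset.filter_subset_filter _ h)

lemma sum_card_link (F : RGraph r) :
    ∑ v ∈ Finset.range F.n, (link F v).card = r * F.edges.card := by
  have hlink : ∀ v, (link F v).card = (F.edges.bipartiteAbove (· ∈ ·) v).card := fun v =>
    Finset.card_image_of_injOn fun e₁ h₁ e₂ h₂ h => by
      rw [← Finset.insert_erase (Finset.mem_filter.1 h₁).2,
        ← Finset.insert_erase (Finset.mem_filter.1 h₂).2]
      exact congrArg (insert v) h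
  have hbelow : ∀ e ∈ F.edges, ((Finset.range F.n).bipartiteBelow (· ∈ ·) e).card = r :=
    fun e he => by
      rw [Finset.bipartiteBelow, Finset.filter_mem_eq_inter,
        Finset.inter_eq_right.2 fun v hv => Finset.mem_range.2 (F.valid e he v hv), F.uniform e he]
  simp_rw [hlink, Finset.sum_card_bipartiteAbove_eq_sum_card_bipartiteBelow,
    Finset.sum_congr rfl hbelow, Finset.sum_const, smul_eq_mul, mul_comm]

lemma exists_mul_card_edges_le_card_link (F : RGraph r) (hn : 0 < F.n) :
    ∃ v < F.n, r * F.edges.card ≤ F.n * (link F v).card := by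
  have hsum : ∑ _v ∈ Finset.range F.n, r * F.edges.card ≤
      ∑ v ∈ Finset.range F.n, F.n * (link F v).card := by
    rw [Finset.sum_const, ← Finset.mul_sum, sum_card_link, Finset.card_range, smul_eq_mul]
  obtain ⟨v, hv, h⟩ := Finset.exists_le_of_sum_le ⟨0, Finset.mem_range.2 hn⟩ hsum
  exact ⟨v, Finset.mem_range.1 hv, h⟩

open Classical in
/-- The blowup of `F` on the vertex set `range m` in which vertex `w` is a clone of `φ w`. -/
noncomputable def blowupAlong (F : RGraph r) (m : ℕ) (φ : ℕ → ℕ) : RGraph r where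
  n := m
  edges := ((Finset.range m).powersetCard r).filter
    fun e => Set.InjOn φ e ∧ e.image φ ∈ F.edges
  uniform := fun _ he => (Finset.mem_powersetCard.1 (Finset.mem_filter.1 he).1).2
  valid := fun _ he _ hv =>
    Finset.mem_range.1 ((Finset.mem_powersetCard.1 (Finset.mem_filter.1 he).1).1 hv)

lemma mem_blowupAlong_edges {F : RGraph r} {m : ℕ} {φ : ℕ → ℕ} {e : Finset ℕ} :
    e ∈ (blowupAlong F m φ).edges ↔
      (∀ v ∈ e, v < m) ∧ Set.InjOn φ e ∧ e.image φ ∈ F.edges := by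
  simp only [blowupAlong, Finset.mem_filter, Finset.mem_powersetCard, Finset.subset_iff,
    Finset.mem_range]
  constructor
  · rintro ⟨⟨he, -⟩, hinj, hF⟩
    exact ⟨he, hinj, hF⟩
  · rintro ⟨he, hinj, hF⟩
    exact ⟨⟨he, Finset.card_image_of_injOn hinj ▸ F.uniform _ hF⟩, hinj, hF⟩

lemma isBlowup_blowupAlong {F : RGraph r} {m : ℕ} {φ : ℕ → ℕ} (h : ∀ v < m, φ v < F.n) :
    IsBlowup F (blowupAlong F m φ) :=
  ⟨φ, h, fun _ => mem_blowupAlong_edges⟩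

namespace Clonable

variable {𝔉 : Set (RGraph r)} {F : RGraph r} {v : ℕ}

/-- The new vertex `F.n` is a clone of `v`; it adds the edges `insert F.n I` for `I ∈ link F v`. -/
lemma exists_clone (hc : Clonable 𝔉) (hF : F ∈ 𝔉) (hv : v < F.n) :
    ∃ G ∈ 𝔉, G.n = F.n + 1 ∧ F.edges.card + (link F v).card ≤ G.edges.card ∧
      link F v ⊆ link G v := by
  set φ : ℕ → ℕ := fun w => if w = F.n then v else w
  have hφ_id : ∀ w < F.n, φ w = w := fun w hw => if_neg hw.ne
  have hφ_new : φ F.n = v := if_pos rfl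
  have hφ_lt : ∀ w < F.n + 1, φ w < F.n := fun w hw => by
    by_cases h : w = F.n
    · simpa [φ, h] using hv
    · rw [hφ_id w (by omega)]; omega
  set G := blowupAlong F (F.n + 1) φ
  have hlt : ∀ I ∈ link F v, ∀ u ∈ I, u < F.n := fun I hI u hu =>
    F.valid _ (mem_link_iff.1 hI).2 u (Finset.mem_insert_of_mem hu)
  have hold : F.edges ⊆ G.edges := fun e he => by
    have hid : ∀ u ∈ e, φ u = u := fun u hu => hφ_id u (F.valid e he u hu)
    refine mem_blowupAlong_edges.2 ⟨fun u hu => (F.valid e he u hu).trans (by omega), ?_, ?_⟩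
    · exact fun a ha b hb hab => by rwa [hid a ha, hid b hb] at hab
    · rwa [Finset.image_congr hid, Finset.image_id']
  have hnew : ∀ I ∈ link F v, insert F.n I ∈ G.edges := fun I hI => by
    obtain ⟨hvI, hins⟩ := mem_link_iff.1 hI
    have hid : ∀ u ∈ I, φ u = u := fun u hu => hφ_id u (hlt I hI u hu)
    refine mem_blowupAlong_edges.2 ⟨fun u hu => ?_, ?_, ?_⟩
    · rcases Finset.mem_insert.1 hu with rfl | hu
      · omega
      · exact (hlt I hI u hu).trans (by omega)
    · rw [Finset.coe_insert, Set.injOn_insert fun h => (hlt I hI _ h).false]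
      refine ⟨fun a ha b hb hab => by rwa [hid a ha, hid b hb] at hab, ?_⟩
      rintro ⟨u, hu, hφu⟩
      rw [hid u hu, hφ_new] at hφu
      exact hvI (hφu ▸ hu)
    · rwa [Finset.image_insert, hφ_new, Finset.image_congr hid, Finset.image_id']
  have hdisj : Disjoint F.edges ((link F v).image (insert F.n)) :=
    Finset.disjoint_left.2 fun e he he' => by
      obtain ⟨I, -, rfl⟩ := Finset.mem_image.1 he'
      exact (F.valid _ he F.n (Finset.mem_insert_self _ _)).false
  have hinj : Set.InjOn (insert F.n) (link F v : Set (Finset ℕ)) := fun I hI J hJ h => by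
    rw [← Finset.erase_insert fun h => (hlt I hI _ h).false,
      ← Finset.erase_insert fun h => (hlt J hJ _ h).false, h]
  refine ⟨G, hc F hF G (isBlowup_blowupAlong hφ_lt), rfl, ?_, link_mono hold v⟩
  calc F.edges.card + (link F v).card
      = (F.edges ∪ (link F v).image (insert F.n)).card := by
        rw [Finset.card_union_of_disjoint hdisj, Finset.card_image_of_injOn hinj]
    _ ≤ G.edges.card :=
        Finset.card_le_card (Finset.union_subset hold (Finset.image_subset_iff.2 hnew))

lemma exists_clone_iterate (hc : Clonable 𝔉) (hF : F ∈ 𝔉) (hv : v < F.n) (k : ℕ) :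
    ∃ G ∈ 𝔉, G.n = F.n + k ∧ F.edges.card + k * (link F v).card ≤ G.edges.card ∧
      link F v ⊆ link G v := by
  induction k with
  | zero => exact ⟨F, hF, rfl, by simp, subset_rfl⟩
  | succ k ih =>
    obtain ⟨G, hG, hGn, hGcard, hGlink⟩ := ih
    obtain ⟨G', hG', hG'n, hG'card, hG'link⟩ := hc.exists_clone hG (by omega : v < G.n)
    refine ⟨G', hG', by omega, ?_, hGlink.trans hG'link⟩
    have := Finset.card_le_card hGlink
    nlinarith

/-- `d` is the degree of a vertex of at least average degree in an extremal `n`-vertex member,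
which is then cloned `k` times. -/
lemma exists_mFam_add_le (hc : Clonable 𝔉) {n : ℕ} (hn : 0 < n) :
    ∃ d : ℕ, r * mFam 𝔉 n ≤ n * d ∧ ∀ k, mFam 𝔉 n + k * d ≤ mFam 𝔉 (n + k) := by
  by_cases h : ∃ F ∈ 𝔉, F.n = n
  · obtain ⟨F, hF, rfl, hFm⟩ := exists_card_edges_eq_mFam h
    obtain ⟨v, hv, hdeg⟩ := exists_mul_card_edges_le_card_link F hn
    refine ⟨(link F v).card, hFm ▸ hdeg, fun k => ?_⟩
    obtain ⟨G, hG, hGn, hGcard, -⟩ := hc.exists_clone_iterate hF hv k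
    rw [← hFm, ← hGn]
    exact hGcard.trans (card_edges_le_mFam hG)
  · push Not at h
    exact ⟨0, by simp [mFam_eq_zero h], fun k => by simp [mFam_eq_zero h]⟩

end Clonable

lemma tendsto_ascFactorial_div_pow (r : ℕ) :
    Tendsto (fun n : ℕ => (n.ascFactorial r : ℝ) / (n : ℝ) ^ r) atTop (𝓝 1) := by
  have hupper : Tendsto (fun n : ℕ => (1 + (r : ℝ) / n) ^ r) atTop (𝓝 1) := by
    simpa using ((tendsto_const_div_atTop_nhds_zero_nat (r : ℝ)).const_add 1).pow r
  refine tendsto_of_tendsto_of_tendsto_of_le_of_le' tendsto_const_nhds hupper ?_ ?_ <;>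
    filter_upwards [eventually_gt_atTop 0] with n hn <;>
    have hpow : (0 : ℝ) < (n : ℝ) ^ r := by positivity
  · rw [le_div_iff₀ hpow, one_mul]
    exact_mod_cast Nat.pow_succ_le_ascFactorial n r
  · rw [div_le_iff₀ hpow, ← mul_pow, add_mul, div_mul_cancel₀ _ (by positivity), one_mul]
    calc (n.ascFactorial r : ℝ) ≤ ((n + 1).ascFactorial r : ℕ) := by
          exact_mod_cast Nat.ascFactorial_le r n.le_succ
      _ ≤ ((n + r) ^ r : ℕ) := by exact_mod_cast Nat.ascFactorial_le_pow_add n r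
      _ = ((n : ℝ) + r) ^ r := by push_cast; ring

section Growth

variable {a : ℕ → ℝ}

/-- `a n / (n (n+1) ⋯ (n+r-1))` is nondecreasing, bounded by `1`, and asymptotic to `a n / n ^ r`. -/
lemma exists_tendsto_div_pow (hbound : ∀ n, a n ≤ (n : ℝ) ^ r)
    (hstep : ∀ n, 0 < n → ∃ d : ℝ, r * a n ≤ n * d ∧ ∀ k : ℕ, a n + k * d ≤ a (n + k)) :
    ∃ L, Tendsto (fun n : ℕ => a n / (n : ℝ) ^ r) atTop (𝓝 L) := by
  set b : ℕ → ℝ := fun n => a (n + 1) / ((n + 1).ascFactorial r : ℝ)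
  have hA : ∀ n, (0 : ℝ) < ((n + 1).ascFactorial r : ℕ) := fun n => by
    exact_mod_cast Nat.ascFactorial_pos n r
  have hmono : Monotone b := monotone_nat_of_le_succ fun n => by
    obtain ⟨d, hd, hdk⟩ := hstep (n + 1) n.succ_pos
    have hsucc := hdk 1
    push_cast at hd hsucc
    have hrec : ((n : ℝ) + 1 + r) * a (n + 1) ≤ ((n : ℝ) + 1) * a (n + 1 + 1) := by nlinarith
    have hA_succ : ((n : ℝ) + 1) * ((n + 1 + 1).ascFactorial r : ℕ) =
        ((n : ℝ) + 1 + r) * ((n + 1).ascFactorial r : ℕ) := by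
      exact_mod_cast Nat.succ_ascFactorial (n + 1) r
    simp only [b, div_le_div_iff₀ (hA n) (hA (n + 1))]
    refine le_of_mul_le_mul_left ?_ (by positivity : (0 : ℝ) < n + 1)
    calc ((n : ℝ) + 1) * (a (n + 1) * ((n + 1 + 1).ascFactorial r : ℕ))
        = ((n : ℝ) + 1 + r) * a (n + 1) * ((n + 1).ascFactorial r : ℕ) := by
          linear_combination a (n + 1) * hA_succ
      _ ≤ ((n : ℝ) + 1) * a (n + 1 + 1) * ((n + 1).ascFactorial r : ℕ) :=
          mul_le_mul_of_nonneg_right hrec (hA n).le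
      _ = ((n : ℝ) + 1) * (a (n + 1 + 1) * ((n + 1).ascFactorial r : ℕ)) := by ring
  have hbdd : BddAbove (Set.range b) := ⟨1, by
    rintro _ ⟨n, rfl⟩
    refine (div_le_one (hA n)).2 ((hbound (n + 1)).trans ?_)
    exact_mod_cast Nat.pow_succ_le_ascFactorial (n + 1) r⟩
  refine ⟨⨆ n, b n, ?_⟩
  have hb : Tendsto (fun n : ℕ => a n / (n.ascFactorial r : ℝ)) atTop (𝓝 (⨆ n, b n)) :=
    (tendsto_add_atTop_iff_nat 1).1 (tendsto_atTop_ciSup hmono hbdd)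
  simpa using (hb.mul (tendsto_ascFactorial_div_pow r)).congr' <|
    (eventually_gt_atTop 0).mono fun n hn => by
      have : (0 : ℝ) < n.ascFactorial r := by
        exact_mod_cast Nat.ascFactorial_pos (n - 1) r |>.trans_eq (by rw [Nat.sub_add_cancel hn])
      field_simp

lemma add_mul_le_of_tendsto_div_pow {L ε : ℝ}
    (hL : Tendsto (fun n : ℕ => a n / (n : ℝ) ^ r) atTop (𝓝 L))
    (hstep : ∀ n, 0 < n → ∃ d : ℝ, r * a n ≤ n * d ∧ ∀ k : ℕ, a n + k * d ≤ a (n + k))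
    (hε : 0 < ε) :
    ∃ n0 : ℕ, ∀ n1 n2 : ℕ, n0 ≤ n1 → n1 ≤ n2 →
      a n1 + ((n2 : ℝ) - n1) * (r * L - ε) * (n1 : ℝ) ^ (r - 1) ≤ a n2 := by
  have hδ : 0 < ε / (r + 1) := by positivity
  obtain ⟨N, hN⟩ := eventually_atTop.1 <| hL.eventually (eventually_gt_nhds (sub_lt_self L hδ))
  refine ⟨N + 1, fun n1 n2 h1 h2 => ?_⟩
  have hn1 : (0 : ℝ) < n1 := by exact_mod_cast (by omega : 0 < n1)
  obtain ⟨d, hd, hdk⟩ := hstep n1 (by exact_mod_cast hn1)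
  have hlink : (r * L - ε) * (n1 : ℝ) ^ (r - 1) ≤ d := by
    rcases Nat.eq_zero_or_pos r with rfl | hr
    · simp only [CharP.cast_eq_zero, zero_mul, zero_sub, Nat.zero_sub, pow_zero, mul_one] at hd ⊢
      nlinarith
    have ha := (lt_div_iff₀ (by positivity)).1 (hN n1 (by omega))
    rw [← pow_sub_one_mul hr.ne'] at ha
    have hcoef : (r : ℝ) * L - ε ≤ r * (L - ε / (r + 1)) := by
      have : (r : ℝ) * (ε / (r + 1)) ≤ ε := by
        rw [mul_div_assoc', div_le_iff₀ (by positivity)]; nlinarith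
      linarith
    refine le_of_mul_le_mul_right ?_ hn1
    calc (r * L - ε) * (n1 : ℝ) ^ (r - 1) * n1
        = (r * L - ε) * ((n1 : ℝ) ^ (r - 1) * n1) := by ring
      _ ≤ r * (L - ε / (r + 1)) * ((n1 : ℝ) ^ (r - 1) * n1) :=
          mul_le_mul_of_nonneg_right hcoef (by positivity)
      _ ≤ r * a n1 := by rw [mul_assoc]; exact mul_le_mul_of_nonneg_left ha.le (by positivity)
      _ ≤ d * n1 := by linarith
  have := hdk (n2 - n1)
  rw [Nat.cast_sub h2, Nat.add_sub_cancel' h2] at this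
  nlinarith [mul_le_mul_of_nonneg_left hlink (sub_nonneg.2 (by exact_mod_cast h2 : (n1 : ℝ) ≤ n2))]

end Growth

/-- For a clonable family `𝔉` and every `ε > 0` there exists `n0` such that for
all `n2 ≥ n1 ≥ n0`, `m(𝔉, n2) ≥ m(𝔉, n1) + (n2 - n1)(r·m(𝔉) - ε) n1^{r-1}`. -/
theorem mFam_growth {r : ℕ} (𝔉 : Set (RGraph r)) (hc : Clonable 𝔉) :
    ∀ ε > (0 : ℝ), ∃ n0 : ℕ, ∀ n1 n2 : ℕ, n0 ≤ n1 → n1 ≤ n2 →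
      (mFam 𝔉 n1 : ℝ) + ((n2 : ℝ) - (n1 : ℝ)) * ((r : ℝ) * mDen 𝔉 - ε) * (n1 : ℝ) ^ (r - 1) ≤
        (mFam 𝔉 n2 : ℝ) := by
  intro ε hε
  have hstep : ∀ n, 0 < n → ∃ d : ℝ, r * (mFam 𝔉 n : ℝ) ≤ n * d ∧
      ∀ k : ℕ, (mFam 𝔉 n : ℝ) + k * d ≤ mFam 𝔉 (n + k) := fun n hn => by
    obtain ⟨d, hd, hdk⟩ := hc.exists_mFam_add_le hn
    exact ⟨d, by exact_mod_cast hd, fun k => by exact_mod_cast hdk k⟩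
  have hbound : ∀ n, (mFam 𝔉 n : ℝ) ≤ (n : ℝ) ^ r := fun n => by
    exact_mod_cast (mFam_le_choose 𝔉 n).trans (Nat.choose_le_pow n r)
  obtain ⟨L, hL⟩ := exists_tendsto_div_pow hbound hstep
  rw [mDen, hL.limUnder_eq]
  exact add_mul_le_of_tendsto_div_pow hL hstep hε

end TuranGT
end

section
/- For every integer t ≥ 3, the family Forb(K_t) of K_t-free graphs is 𝔅(K_{t-1})-stable. -/
open Filter

namespace TuranGT

variable {r : ℕ}

/-!
Erdős's degree-majorization argument. Pick a vertex `x` of maximum degree, give its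
non-neighbourhood `V` a new colour and recurse into its neighbourhood `W`, whose cliques are
smaller by one. Let `H` be the complete multipartite graph of the colour classes. The
edges of `F` lost at this step, those inside `V`, are paid for by degree counting:
`2 e(V) + e(V, W) ≤ ∑_{v ∈ V} deg v ≤ |V| |W|`, and `H` gains exactly the `|V| |W|` pairs
between `V` and `W`. Summed over the recursion, `|F| + |F \ H| ≤ |H|`, so `|H \ F| ≥ 2 |F \ H|`
and `|F| ≤ |H| - |F △ H| / 3`.
-/

open Finset

section Distance

variable {𝔥 : Set (RGraph r)} {F H : RGraph r}

lemma RGraph.edges_subset_powersetCard (G : RGraph r) :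
    G.edges ⊆ (range G.n).powersetCard r := fun e he =>
  mem_powersetCard.2
    ⟨fun v hv => mem_range.2 (G.valid e he v hv), G.uniform e he⟩

lemma card_edges_le_mFam_s12 (hH : H ∈ 𝔥) : #H.edges ≤ mFam 𝔥 H.n := by
  refine le_csSup ⟨#((range H.n).powersetCard r), ?_⟩ ⟨H, hH, rfl, rfl⟩
  rintro k ⟨G, -, hG, rfl⟩
  exact hG ▸ card_le_card G.edges_subset_powersetCard

lemma distFam_le_card_symmDiff (hH : H ∈ 𝔥) (hn : H.n = F.n) :
    distFam 𝔥 F ≤ #(symmDiff F.edges H.edges) :=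
  csInf_le ⟨0, by rintro x ⟨G, -, -, rfl⟩; positivity⟩ ⟨H, hH, hn, rfl⟩

lemma card_edges_le_mFam_sub_distFam (hH : H ∈ 𝔥) (hn : H.n = F.n)
    (hdom : #F.edges + #(F.edges \ H.edges) ≤ #H.edges) :
    (#F.edges : ℝ) ≤ mFam 𝔥 F.n - 1 / 3 * distFam 𝔥 F := by
  have hsymm : #(symmDiff F.edges H.edges) = #(F.edges \ H.edges) + #(H.edges \ F.edges) := by
    rw [symmDiff_def]
    exact card_union_of_disjoint disjoint_sdiff_sdiff
  have hF := card_sdiff_add_card_inter F.edges H.edges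
  have hH' := card_sdiff_add_card_inter H.edges F.edges
  rw [inter_comm] at hH'
  have key : 3 * #F.edges + #(symmDiff F.edges H.edges) ≤ 3 * #H.edges := by omega
  have hm : (#H.edges : ℝ) ≤ mFam 𝔥 F.n := by exact_mod_cast hn ▸ card_edges_le_mFam_s12 hH
  have hd := distFam_le_card_symmDiff hH hn
  have key' : 3 * (#F.edges : ℝ) + #(symmDiff F.edges H.edges) ≤ 3 * #H.edges := by
    exact_mod_cast key
  linarith

end Distance

section Counting

variable {α : Type*} [DecidableEq α]

lemma sum_card_inter_eq_sum_card_filter_mem (V : Finset α) (E : Finset (Finset α)) :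
    ∑ e ∈ E, #(V ∩ e) = ∑ v ∈ V, #{e ∈ E | v ∈ e} := by
  simp_rw [← filter_mem_eq_inter, card_filter]
  exact sum_comm

lemma card_filter_mem_eq_card_filter_pair_mem {B : Finset α} {E : Finset (Finset α)}
    (hE : E ⊆ B.powersetCard 2) (v : α) :
    #{e ∈ E | v ∈ e} = #{u ∈ B | {v, u} ∈ E} := by
  symm
  refine card_bij (fun u _ => {v, u}) (fun u hu => ?_) (fun u hu u' _ huu' => ?_) fun e he => ?_
  · exact mem_filter.2 ⟨(mem_filter.1 hu).2, mem_insert_self _ _⟩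
  · have hvu : v ≠ u := card_pair_eq_two_iff.1 (mem_powersetCard.1 (hE (mem_filter.1 hu).2)).2
    have hu'' : u ∈ ({v, u'} : Finset α) := huu' ▸ mem_insert_of_mem (mem_singleton_self u)
    simpa [hvu.symm] using hu''
  · obtain ⟨heE, hve⟩ := mem_filter.1 he
    obtain ⟨heB, he2⟩ := mem_powersetCard.1 (hE heE)
    obtain ⟨a, b, -, rfl⟩ := card_eq_two.1 he2
    obtain rfl | rfl : v = a ∨ v = b := by simpa using hve
    · exact ⟨b, mem_filter.2 ⟨heB (by simp), heE⟩, rfl⟩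
    · exact ⟨a, mem_filter.2 ⟨heB (by simp), pair_comm v a ▸ heE⟩, pair_comm v a⟩

lemma sum_ite_mem_eq_card_add_card_sdiff (E P : Finset α) :
    ∑ e ∈ E, (if e ∈ P then 1 else 2) = #E + #(E \ P) := by
  rw [sum_ite, sum_const, sum_const, smul_eq_mul, smul_eq_mul, ← filter_notMem_eq_sdiff,
    ← card_filter_add_card_filter_not (fun e => e ∈ P) (s := E)]
  ring

end Counting

section Colouring

def edgesIn (F : RGraph 2) (B : Finset ℕ) : Finset (Finset ℕ) := {e ∈ F.edges | e ⊆ B}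

/-- The edges of the complete multipartite graph on `B` whose parts are the colour classes
of `c`. -/
def crossPairs (c : ℕ → ℕ) (B : Finset ℕ) : Finset (Finset ℕ) :=
  {e ∈ B.powersetCard 2 | #(e.image c) = 2}

def IsClique (F : RGraph 2) (K : Finset ℕ) : Prop :=
  (K : Set ℕ).Pairwise fun u v => {u, v} ∈ F.edges

variable {F : RGraph 2} {B V W : Finset ℕ} {c c' : ℕ → ℕ} {k : ℕ}

lemma edgesIn_subset_powersetCard : edgesIn F B ⊆ B.powersetCard 2 := fun e he => by
  obtain ⟨he, heB⟩ := mem_filter.1 he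
  exact mem_powersetCard.2 ⟨heB, F.uniform e he⟩

lemma edgesIn_range : edgesIn F (range F.n) = F.edges :=
  filter_true_of_mem fun _ he => (mem_powersetCard.1 (F.edges_subset_powersetCard he)).1

lemma edgesIn_empty : edgesIn F ∅ = ∅ := by
  simpa using subset_empty.1 (edgesIn_subset_powersetCard (F := F) (B := ∅))

lemma filter_edgesIn_subset (hWB : W ⊆ B) : {e ∈ edgesIn F B | e ⊆ W} = edgesIn F W := by
  ext e
  simp only [edgesIn, mem_filter, and_assoc]
  exact ⟨fun ⟨he, _, heW⟩ => ⟨he, heW⟩, fun ⟨he, heW⟩ => ⟨he, heW.trans hWB, heW⟩⟩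

lemma pair_notMem_edges (v : ℕ) : {v, v} ∉ F.edges := fun h => by
  simpa using F.uniform _ h

lemma crossPairs_subset_powersetCard : crossPairs c B ⊆ B.powersetCard 2 := filter_subset _ _

lemma pair_mem_crossPairs {a b : ℕ} : {a, b} ∈ crossPairs c B ↔ a ∈ B ∧ b ∈ B ∧ c a ≠ c b := by
  by_cases hab : a = b
  · subst hab
    simp [crossPairs]
  · simp [crossPairs, insert_subset_iff, card_pair hab, card_pair_eq_two_iff, and_assoc]

lemma filter_crossPairs_subset (hWB : W ⊆ B) : {e ∈ crossPairs c B | e ⊆ W} = crossPairs c W := by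
  ext e
  simp only [crossPairs, mem_filter, mem_powersetCard]
  exact ⟨fun ⟨⟨⟨_, h2⟩, h3⟩, heW⟩ => ⟨⟨heW, h2⟩, h3⟩,
    fun ⟨⟨heW, h2⟩, h3⟩ => ⟨⟨⟨heW.trans hWB, h2⟩, h3⟩, heW⟩⟩

lemma crossPairs_congr (h : ∀ v ∈ B, c v = c' v) : crossPairs c B = crossPairs c' B :=
  filter_congr fun e he => by
    rw [image_congr fun v hv => h v ((mem_powersetCard.1 he).1 hv)]

/-- Pairs of `H = crossPairs c B` weigh `1` and all other pairs `2`, so that the edges of `F`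
weigh `|F| + |F \ H|` and `H` weighs `|H|`. -/
lemma weight_eq_card_inter_add (hVW : Disjoint V W) (hV : ∀ v ∈ V, c v = k)
    (hW : ∀ w ∈ W, c w ≠ k) {e : Finset ℕ} (he : e ∈ (V ∪ W).powersetCard 2) :
    (if e ∈ crossPairs c (V ∪ W) then 1 else 2) =
      #(V ∩ e) + if e ⊆ W then (if e ∈ crossPairs c W then 1 else 2) else 0 := by
  obtain ⟨heB, he2⟩ := mem_powersetCard.1 he
  obtain ⟨a, b, hab, rfl⟩ := card_eq_two.1 he2
  have hVW' := disjoint_left.1 hVW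
  have hWV := disjoint_right.1 hVW
  rw [inter_comm, ← filter_mem_eq_inter, filter_insert, filter_singleton]
  rcases mem_union.1 (heB (mem_insert_self a {b})) with ha | ha <;>
    rcases mem_union.1 (heB (by simp : b ∈ ({a, b} : Finset ℕ))) with hb | hb
  all_goals simp [pair_mem_crossPairs, insert_subset_iff, hab, ha, hb, hV, hW,
    fun w hw => (hW w hw).symm, hVW', hWV]

lemma sum_weight_eq_sum_card_filter_mem_add (hVW : Disjoint V W) (hV : ∀ v ∈ V, c v = k)
    (hW : ∀ w ∈ W, c w ≠ k) {E : Finset (Finset ℕ)} (hE : E ⊆ (V ∪ W).powersetCard 2) :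
    ∑ e ∈ E, (if e ∈ crossPairs c (V ∪ W) then 1 else 2) =
      ∑ v ∈ V, #{e ∈ E | v ∈ e} + ∑ e ∈ E with e ⊆ W, (if e ∈ crossPairs c W then 1 else 2) := by
  rw [sum_congr rfl fun e he => weight_eq_card_inter_add hVW hV hW (hE he), sum_add_distrib,
    sum_card_inter_eq_sum_card_filter_mem, sum_filter]

lemma card_filter_mem_crossPairs (hV : ∀ v ∈ V, c v = k) (hW : ∀ w ∈ W, c w ≠ k) {v : ℕ}
    (hv : v ∈ V) : #{e ∈ crossPairs c (V ∪ W) | v ∈ e} = #W := by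
  rw [card_filter_mem_eq_card_filter_pair_mem crossPairs_subset_powersetCard]
  congr 1
  ext u
  simp only [mem_filter, pair_mem_crossPairs, mem_union, hV v hv]
  constructor
  · rintro ⟨hu | hu, -, -, hne⟩
    · exact absurd (hV u hu).symm hne
    · exact hu
  · exact fun hu => ⟨Or.inr hu, Or.inl hv, Or.inr hu, (hW u hu).symm⟩

lemma card_edgesIn_add_card_sdiff_le_of_union (hVW : Disjoint V W) (hV : ∀ v ∈ V, c v = k)
    (hW : ∀ w ∈ W, c w ≠ k) (hdeg : ∀ v ∈ V, #{e ∈ edgesIn F (V ∪ W) | v ∈ e} ≤ #W)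
    (hdom : #(edgesIn F W) + #(edgesIn F W \ crossPairs c W) ≤ #(crossPairs c W)) :
    #(edgesIn F (V ∪ W)) + #(edgesIn F (V ∪ W) \ crossPairs c (V ∪ W)) ≤
      #(crossPairs c (V ∪ W)) := by
  have hWB : W ⊆ V ∪ W := subset_union_right
  have hP := sum_weight_eq_sum_card_filter_mem_add hVW hV hW
    (crossPairs_subset_powersetCard (c := c))
  rw [filter_crossPairs_subset hWB, sum_ite_mem_eq_card_add_card_sdiff,
    sum_ite_mem_eq_card_add_card_sdiff, sdiff_self, sdiff_self,
    sum_congr rfl fun v hv => card_filter_mem_crossPairs hV hW hv] at hP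
  have hE := sum_weight_eq_sum_card_filter_mem_add hVW hV hW
    (edgesIn_subset_powersetCard (F := F))
  rw [filter_edgesIn_subset hWB, sum_ite_mem_eq_card_add_card_sdiff,
    sum_ite_mem_eq_card_add_card_sdiff] at hE
  have hsum := sum_le_sum hdeg
  simp only [sum_const, smul_eq_mul] at hP hsum
  omega

lemma card_filter_mem_edgesIn {x : ℕ} (hx : x ∈ B) :
    #{e ∈ edgesIn F B | x ∈ e} = #{u ∈ B | {x, u} ∈ F.edges} := by
  rw [card_filter_mem_eq_card_filter_pair_mem edgesIn_subset_powersetCard]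
  congr 1
  refine filter_congr fun u hu => ?_
  simp [edgesIn, insert_subset_iff, hx, hu]

lemma IsClique.insert {K : Finset ℕ} (hK : IsClique F K) {x : ℕ}
    (hx : ∀ u ∈ K, {x, u} ∈ F.edges) : IsClique F (insert x K) := by
  rw [IsClique, coe_insert, Set.pairwise_insert]
  exact ⟨hK, fun u hu _ => ⟨hx u hu, pair_comm x u ▸ hx u hu⟩⟩

theorem exists_colouring_card_edgesIn_add_card_sdiff_le (F : RGraph 2) (B : Finset ℕ) (k : ℕ)
    (hB : ∀ K ⊆ B, IsClique F K → #K ≤ k) :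
    ∃ c : ℕ → ℕ, (∀ v ∈ B, c v < k) ∧
      #(edgesIn F B) + #(edgesIn F B \ crossPairs c B) ≤ #(crossPairs c B) := by
  induction B using Finset.strongInduction generalizing k with
  | H B ih =>
  obtain rfl | hne := B.eq_empty_or_nonempty
  · exact ⟨id, by simp, by simp [edgesIn_empty]⟩
  obtain ⟨x, hxB, hmax⟩ := B.exists_max_image (fun v => #{e ∈ edgesIn F B | v ∈ e}) hne
  obtain ⟨k, rfl⟩ : ∃ j, k = j + 1 :=
    Nat.exists_eq_add_one.2 (hB {x} (by simpa) (by simp [IsClique]))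
  set W := {u ∈ B | {x, u} ∈ F.edges}
  have hxW : x ∉ W := fun h => pair_notMem_edges x (mem_filter.1 h).2
  have hWB : W ⊂ B := ⟨filter_subset _ _, fun h => hxW (h hxB)⟩
  obtain ⟨c, hc, hdom⟩ := ih W hWB k fun K hKW hK => by
    have := hB (insert x K) (insert_subset hxB (hKW.trans hWB.1))
      (hK.insert fun u hu => (mem_filter.1 (hKW hu)).2)
    rwa [card_insert_of_notMem fun h => hxW (hKW h), Nat.add_le_add_iff_right] at this
  let c₁ v := if v ∈ W then c v else k
  have hunion : (B \ W) ∪ W = B := sdiff_union_of_subset hWB.1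
  have hdeg (v) (hv : v ∈ B \ W) : #{e ∈ edgesIn F ((B \ W) ∪ W) | v ∈ e} ≤ #W := by
    rw [hunion, ← card_filter_mem_edgesIn hxB]
    exact hmax v (mem_sdiff.1 hv).1
  have hstep := card_edgesIn_add_card_sdiff_le_of_union sdiff_disjoint (c := c₁)
    (fun v hv => if_neg (mem_sdiff.1 hv).2) (fun w hw => by simpa [c₁, hw] using (hc w hw).ne)
    hdeg (by rwa [crossPairs_congr fun w hw => if_pos hw])
  refine ⟨c₁, fun v _ => ?_, by rwa [hunion] at hstep⟩
  simp only [c₁]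
  split_ifs with hv
  exacts [(hc v hv).trans k.lt_succ_self, k.lt_succ_self]

theorem containsCopy_completeGraph {K : Finset ℕ} (hK : IsClique F K) (hKn : K ⊆ range F.n)
    {t : ℕ} (ht : t ≤ #K) : ContainsCopy F (completeGraph t) := by
  obtain ⟨L, hLK, hL⟩ := exists_subset_card_eq ht
  set g := L.orderEmbOfFin hL
  have hgL (i : Fin t) : g i ∈ K := hLK (L.orderEmbOfFin_mem hL i)
  refine ⟨fun i => if h : i < t then g ⟨i, h⟩ else 0, fun i hi j hj hij => ?_, fun i hi => ?_,
    fun e he => ?_⟩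
  · replace hi : i < t := hi
    replace hj : j < t := hj
    dsimp only at hij
    rw [dif_pos hi, dif_pos hj] at hij
    simpa using g.injective hij
  · replace hi : i < t := hi
    simpa [hi] using hKn (hgL ⟨i, hi⟩)
  · obtain ⟨he, he2⟩ := mem_powersetCard.1 he
    obtain ⟨i, j, hij, rfl⟩ := card_eq_two.1 he2
    have hi : i < t := mem_range.1 (he (by simp))
    have hj : j < t := mem_range.1 (he (by simp))
    simpa [hi, hj] using hK (hgL ⟨i, hi⟩) (hgL ⟨j, hj⟩) (by simpa using hij)

def completeMultipartite (n : ℕ) (c : ℕ → ℕ) : RGraph 2 where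
  n := n
  edges := crossPairs c (range n)
  uniform _ he := (mem_powersetCard.1 (crossPairs_subset_powersetCard he)).2
  valid _ he _ hv := mem_range.1 ((mem_powersetCard.1 (crossPairs_subset_powersetCard he)).1 hv)

lemma completeMultipartite_mem_blowupFam {n : ℕ} (hc : ∀ v < n, c v < k) :
    completeMultipartite n c ∈ blowupFam (completeGraph k) := by
  refine ⟨c, hc, fun e => ?_⟩
  simp only [completeMultipartite, completeGraph, crossPairs, mem_filter, mem_powersetCard]
  constructor
  · rintro ⟨⟨heB, he2⟩, himg⟩
    refine ⟨fun v hv => mem_range.1 (heB hv), injOn_of_card_image_eq (himg.trans he2.symm),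
      fun y hy => ?_, himg⟩
    obtain ⟨v, hv, rfl⟩ := mem_image.1 hy
    exact mem_range.2 (hc v (mem_range.1 (heB hv)))
  · rintro ⟨hv, hinj, -, himg⟩
    exact ⟨⟨fun v hve => mem_range.2 (hv v hve), card_image_of_injOn hinj ▸ himg⟩, himg⟩

end Colouring

theorem erdos_simonovits_stability_general (t : ℕ) :
    HStable {G : RGraph 2 | ¬ ContainsCopy G (completeGraph t)}
      (blowupFam (completeGraph (t - 1))) := by
  refine ⟨1 / 3, by norm_num, 0, fun F hF _ _ => ?_⟩
  have hclique (K : Finset ℕ) (hK : K ⊆ range F.n) (hKF : IsClique F K) : #K ≤ t - 1 :=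
    Nat.le_sub_one_of_lt (lt_of_not_ge fun ht => hF (containsCopy_completeGraph hKF hK ht))
  obtain ⟨c, hc, hdom⟩ := exists_colouring_card_edgesIn_add_card_sdiff_le F (range F.n) _ hclique
  rw [edgesIn_range] at hdom
  exact card_edges_le_mFam_sub_distFam
    (completeMultipartite_mem_blowupFam fun v hv => hc v (mem_range.2 hv)) rfl hdom

/-- Erdős–Simonovits stability: for `t ≥ 3`, `Forb(K_t)` is
`𝔅(K_{t-1})`-stable. -/
theorem erdos_simonovits_stability (t : ℕ) (ht : 3 ≤ t) :
    HStable {G : RGraph 2 | ¬ ContainsCopy G (completeGraph t)}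
      (blowupFam (completeGraph (t - 1))) :=
  erdos_simonovits_stability_general t

end TuranGT
end

section
/- For every integer t ≥ 3 there exist ε>0 and n0 such that the following holds: if G is a K_t-free graph on n ≥ n0 vertices with d_{𝔅(K_{t-1})}(G) ≤ ε n² and minimum degree at least ((t−2)/(t−1) − ε)·n, then G is (t−1)-partite, i.e., G is a subgraph of some complete multipartite graph on V(G) with t−1 parts. -/
open Filter

namespace TuranGT

variable {r : ℕ}

/-! Write `r = t - 1`. The choice `ε = 1 / (3 r²)` is below
`1 / (r (3r - 1)) = (r - 1) / r - (3r - 4) / (3r - 1)`, so every degree exceeds the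
Andrásfai–Erdős–Sós threshold `(3r - 4) n / (3r - 1)` for `K_{r+1}`-free graphs, and that
theorem makes `G` `r`-colourable. -/

namespace RGraph

def toSimpleGraph (G : RGraph 2) : SimpleGraph (Fin G.n) where
  Adj u v := ({(u : ℕ), (v : ℕ)} : Finset ℕ) ∈ G.edges
  symm := ⟨fun u v h => by rwa [Finset.pair_comm]⟩
  loopless := ⟨fun u h => by simpa using G.uniform _ h⟩

variable {G : RGraph 2}

@[simp]
lemma toSimpleGraph_adj {u v : Fin G.n} :
    G.toSimpleGraph.Adj u v ↔ ({(u : ℕ), (v : ℕ)} : Finset ℕ) ∈ G.edges :=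
  Iff.rfl

lemma eq_pair_of_mem_edges {e : Finset ℕ} (he : e ∈ G.edges) {u v : ℕ} (hu : u ∈ e)
    (hv : v ∈ e) (huv : u ≠ v) : e = {u, v} :=
  (Finset.eq_of_subset_of_card_le (by simp [Finset.insert_subset_iff, hu, hv])
    (by rw [G.uniform e he, Finset.card_pair huv])).symm

lemma containsCopy_completeGraph_of_copy {t : ℕ}
    (φ : SimpleGraph.Copy (⊤ : SimpleGraph (Fin t)) G.toSimpleGraph) :
    ContainsCopy G (completeGraph t) := by
  refine ⟨fun i => if h : i < t then φ ⟨i, h⟩ else 0, ?_, ?_, ?_⟩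
  · intro i (hi : i < t) j (hj : j < t) hij
    simp only [dif_pos hi, dif_pos hj] at hij
    simpa using φ.injective (Fin.ext hij)
  · intro i (hi : i < t)
    simp [hi]
  · intro e he
    obtain ⟨hsub, he2⟩ := Finset.mem_powersetCard.1 he
    obtain ⟨a, b, hab, rfl⟩ := Finset.card_eq_two.1 he2
    have ha : a < t := Finset.mem_range.1 (hsub (by simp))
    have hb : b < t := Finset.mem_range.1 (hsub (by simp))
    simpa [dif_pos ha, dif_pos hb] using
      φ.toHom.map_adj (show (⊤ : SimpleGraph (Fin t)).Adj ⟨a, ha⟩ ⟨b, hb⟩ by simpa using hab)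

lemma cliqueFree_toSimpleGraph {t : ℕ} (h : ¬ ContainsCopy G (completeGraph t)) :
    G.toSimpleGraph.CliqueFree t :=
  SimpleGraph.cliqueFree_iff.2 ⟨fun φ => h (containsCopy_completeGraph_of_copy φ)⟩

lemma degree_toSimpleGraph (v : Fin G.n) [Fintype (G.toSimpleGraph.neighborSet v)] :
    G.toSimpleGraph.degree v = (link G v).card := by
  refine Finset.card_bij (fun u _ => {(u : ℕ)}) ?_ ?_ ?_
  · intro u hu
    have hadj := (G.toSimpleGraph.mem_neighborFinset v u).1 hu
    have hne : (v : ℕ) ≠ u := Fin.val_ne_of_ne (G.toSimpleGraph.ne_of_adj hadj)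
    exact Finset.mem_image.2 ⟨_, Finset.mem_filter.2 ⟨toSimpleGraph_adj.1 hadj, by simp⟩,
      Finset.erase_insert (by simpa using hne)⟩
  · intro u _ w _ huw
    exact Fin.ext (Finset.singleton_inj.1 huw)
  · intro s hs
    obtain ⟨e, ⟨he, hve⟩, rfl⟩ := by
      simpa only [link, Finset.mem_image, Finset.mem_filter] using hs
    obtain ⟨w, hw⟩ := Finset.card_eq_one.1 (by rw [Finset.card_erase_of_mem hve, G.uniform e he])
    have hwe : w ∈ e := Finset.mem_of_mem_erase (hw ▸ Finset.mem_singleton_self w)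
    refine ⟨⟨w, G.valid e he w hwe⟩, ?_, hw.symm⟩
    rw [SimpleGraph.mem_neighborFinset, toSimpleGraph_adj]
    rwa [← hw, Finset.insert_erase hve]

lemma exists_coloring_of_colorable {k : ℕ} (hk : 0 < k) (h : G.toSimpleGraph.Colorable k) :
    ∃ c : ℕ → Fin k, ∀ e ∈ G.edges, ∀ u ∈ e, ∀ v ∈ e, u ≠ v → c u ≠ c v := by
  obtain ⟨C⟩ := h
  refine ⟨fun u => if hu : u < G.n then C ⟨u, hu⟩ else ⟨0, hk⟩, ?_⟩
  intro e he u hu v hv huv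
  have hadj : G.toSimpleGraph.Adj ⟨u, G.valid e he u hu⟩ ⟨v, G.valid e he v hv⟩ := by
    rwa [toSimpleGraph_adj, ← eq_pair_of_mem_edges he hu hv huv]
  simpa [dif_pos (G.valid e he u hu), dif_pos (G.valid e he v hv)] using C.valid hadj

end RGraph

lemma three_mul_sub_four_mul_div_lt {r n d : ℕ} (hr : 2 ≤ r) (hn : 0 < n)
    (hd : (((r : ℝ) - 1) / r - 1 / (3 * (r : ℝ) ^ 2)) * n ≤ d) :
    (3 * r - 4) * n / (3 * r - 1) < d := by
  rw [Nat.div_lt_iff_lt_mul (by omega)]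
  have hr' : (2 : ℝ) ≤ r := by exact_mod_cast hr
  have hn' : (0 : ℝ) < n := by exact_mod_cast hn
  suffices ((3 : ℝ) * r - 4) * n < d * (3 * r - 1) by
    exact_mod_cast (show (((3 * r - 4) * n : ℕ) : ℝ) < ((d * (3 * r - 1) : ℕ) : ℝ) by
      push_cast [show 4 ≤ 3 * r by omega, show 1 ≤ 3 * r by omega]; exact this)
  calc ((3 : ℝ) * r - 4) * n
      < (3 * r - 4) * n + n / (3 * r ^ 2) := by simp only [lt_add_iff_pos_right]; positivity
    _ = ((r - 1) / r - 1 / (3 * r ^ 2)) * n * (3 * r - 1) := by field_simp; ring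
    _ ≤ d * (3 * r - 1) := by gcongr; linarith

/-- For every `t ≥ 3` there are `ε > 0` and `n0` such that every `K_t`-free
graph `G` on `n ≥ n0` vertices with `d_{𝔅(K_{t-1})}(G) ≤ ε n²` and minimum degree at least
`((t-2)/(t-1) - ε) n` is `(t-1)`-partite. -/
theorem kt_free_is_multipartite (t : ℕ) (ht : 3 ≤ t) :
    ∃ ε > (0 : ℝ), ∃ n0 : ℕ, ∀ G : RGraph 2, n0 ≤ G.n →
      ¬ ContainsCopy G (completeGraph t) →
      distFam (blowupFam (completeGraph (t - 1))) G ≤ ε * (G.n : ℝ) ^ 2 →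
      (∀ v < G.n, (((t : ℝ) - 2) / ((t : ℝ) - 1) - ε) * (G.n : ℝ) ≤ ((link G v).card : ℝ)) →
      ∃ c : ℕ → Fin (t - 1), ∀ e ∈ G.edges, ∀ u ∈ e, ∀ v ∈ e, u ≠ v → c u ≠ c v := by
  classical
  obtain ⟨r, rfl⟩ : ∃ r, t = r + 1 := ⟨t - 1, by omega⟩
  have hr : 2 ≤ r := by omega
  refine ⟨1 / (3 * (r : ℝ) ^ 2), by positivity, 1, fun G hn hfree _ hdeg => ?_⟩
  simp only [Nat.cast_add, Nat.cast_one, add_sub_cancel_right,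
    show (r : ℝ) + 1 - 2 = r - 1 by ring] at hdeg
  have : Nonempty (Fin G.n) := ⟨⟨0, hn⟩⟩
  have hmin : (3 * r - 4) * G.n / (3 * r - 1) < G.toSimpleGraph.minDegree :=
    G.toSimpleGraph.le_minDegree_of_forall_le_degree _ fun v => by
      rw [RGraph.degree_toSimpleGraph]
      exact three_mul_sub_four_mul_div_lt hr hn (hdeg v v.2)
  exact RGraph.exists_coloring_of_colorable (by omega)
    (SimpleGraph.colorable_of_cliqueFree_lt_minDegree (RGraph.cliqueFree_toSimpleGraph hfree)
      (by simpa using hmin))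

end TuranGT
end

section
/- Let r ≥ 3. For every ε>0 there exists n0 such that every T_r-free r-graph F with v(F)=n ≥ n0 contains a subgraph F̂ ⊆ F that is Σ_r-free and satisfies |F̂| ≥ |F| − ε n^r. -/
open Filter

namespace TuranGT

variable {r : ℕ}

/-!
Delete from `F` every edge `e` containing `e₁ △ e₂` for some edges `e₁, e₂` with
`|e₁ ∩ e₂| = r - 1`; what remains is `Σ_r`-free. Each such pair `{x, y} = e₁ △ e₂` comes with
one fixed witness: as `F` is `T_r`-free, every edge through `x` and `y` meets the `(r-1)`-set
`e₁ ∩ e₂`. So a deleted edge is determined by `{x, y}`, a vertex of `e₁ ∩ e₂` and `r - 3` further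
vertices, and at most `(r - 1) n^(r-1) ≤ ε n^r` edges are deleted once `n ≥ r / ε`.
-/

theorem exists_eq_insert_inter_of_card_eq_succ {α : Type*} [DecidableEq α] {s t : Finset α}
    (hs : s.card = (s ∩ t).card + 1) (ht : t.card = (s ∩ t).card + 1) :
    ∃ x y, x ∉ t ∧ y ∉ s ∧ s = insert x (s ∩ t) ∧ t = insert y (s ∩ t) := by
  have key : ∀ {s t : Finset α}, s.card = (s ∩ t).card + 1 → ∃ x, x ∉ t ∧ s = insert x (s ∩ t) := by
    intro s t hs
    have hsdiff : (s \ t).card = 1 := by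
      have := Finset.card_sdiff_add_card_inter s t
      omega
    obtain ⟨x, hx⟩ := Finset.card_eq_one.1 hsdiff
    refine ⟨x, (Finset.mem_sdiff.1 (hx ▸ Finset.mem_singleton_self x)).2, ?_⟩
    rw [Finset.insert_eq, ← hx, Finset.sdiff_union_inter]
  obtain ⟨x, hxt, hsx⟩ := key hs
  obtain ⟨y, hys, hty⟩ := key (s := t) (t := s) (by rwa [Finset.inter_comm])
  exact ⟨x, y, hxt, hys, hsx, by rwa [Finset.inter_comm]⟩

theorem symmDiff_image_subset_image_symmDiff {α β : Type*} [DecidableEq α] [DecidableEq β]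
    (f : α → β) (s t : Finset α) : symmDiff (s.image f) (t.image f) ⊆ (symmDiff s t).image f := by
  simp only [Finset.subset_iff, Finset.mem_symmDiff, Finset.mem_image]
  grind

theorem injOn_getD_of_nodup {α : Type*} {l : List α} (hl : l.Nodup) (d : α) :
    Set.InjOn (l.getD · d) (Set.Iio l.length) := by
  intro i hi j hj h
  simp only [List.getD_eq_getElem _ _ hi, List.getD_eq_getElem _ _ hj] at h
  exact hl.getElem_inj_iff.1 h

theorem image_eq_of_mapsTo_of_card_le {α β : Type*} [DecidableEq β] {f : α → β} {s : Finset α}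
    {t : Finset β} (hf : Set.InjOn f s) (hst : ∀ a ∈ s, f a ∈ t) (hcard : t.card ≤ s.card) :
    s.image f = t :=
  Finset.eq_of_subset_of_card_le (Finset.image_subset_iff.2 hst)
    (by rwa [Finset.card_image_of_injOn hf])

theorem exists_eq_insert_inter_of_mem_edges (hr : 1 ≤ r) {F : RGraph r} {e₁ e₂ : Finset ℕ}
    (h₁ : e₁ ∈ F.edges) (h₂ : e₂ ∈ F.edges) (hc : (e₁ ∩ e₂).card = r - 1) :
    ∃ x y, x ≠ y ∧ x ∉ e₁ ∩ e₂ ∧ y ∉ e₁ ∩ e₂ ∧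
      e₁ = insert x (e₁ ∩ e₂) ∧ e₂ = insert y (e₁ ∩ e₂) ∧ symmDiff e₁ e₂ = {x, y} := by
  obtain ⟨x, y, hxt, hys, hsx, hty⟩ := exists_eq_insert_inter_of_card_eq_succ (s := e₁) (t := e₂)
    (by rw [F.uniform e₁ h₁]; omega) (by rw [F.uniform e₂ h₂]; omega)
  have hxy : x ≠ y := by rintro rfl; exact hys (hsx ▸ Finset.mem_insert_self x _)
  refine ⟨x, y, hxy, fun h => hxt (Finset.mem_inter.1 h).2, fun h => hys (Finset.mem_inter.1 h).1,
    hsx, hty, ?_⟩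
  rw [hsx, hty]
  ext a
  simp only [Finset.mem_symmDiff, Finset.mem_insert, Finset.mem_singleton]
  grind

theorem exists_genTriangle_labelling (hr : 2 ≤ r) {A B : Finset ℕ} {x y : ℕ}
    (hA : A.card = r - 1) (hB : B.card = r - 2) (hxy : x ≠ y) (hx : x ∉ A ∪ B) (hy : y ∉ A ∪ B)
    (hAB : Disjoint A B) :
    ∃ f : ℕ → ℕ, Set.InjOn f (Set.Iio (2 * r - 1)) ∧ (∀ i < r - 1, f i ∈ A) ∧
      f (r - 1) = x ∧ f r = y ∧ ∀ i, r < i → i < 2 * r - 1 → f i ∈ B := by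
  set L := A.sort (· ≤ ·) ++ x :: y :: B.sort (· ≤ ·)
  have hlen : L.length = 2 * r - 1 := by
    simp only [L, List.length_append, List.length_cons, Finset.length_sort, hA, hB]
    omega
  have hnd : L.Nodup := by
    simp only [Finset.mem_union, not_or] at hx hy
    simp only [L, List.nodup_append, List.nodup_cons, Finset.sort_nodup, List.mem_cons,
      Finset.mem_sort, not_or, and_true, ne_eq, forall_eq_or_imp, Finset.forall_mem_not_eq,
      true_and]
    exact ⟨⟨⟨hxy, hx.2⟩, hy.2⟩, fun a ha => ⟨ne_of_mem_of_not_mem ha hx.1,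
      ne_of_mem_of_not_mem ha hy.1, Finset.disjoint_left.1 hAB ha⟩⟩
  refine ⟨(L.getD · 0), hlen ▸ injOn_getD_of_nodup hnd 0, fun i hi => ?_, ?_, ?_,
    fun i hi hi' => ?_⟩
  all_goals dsimp only
  · rw [List.getD_append _ _ _ _ (by simpa [hA]), List.getD_eq_getElem _ _ (by simpa [hA])]
    exact (A.mem_sort _).1 (List.getElem_mem _)
  · rw [List.getD_append_right _ _ _ _ (by simp [hA])]
    simp [hA]
  · rw [List.getD_append_right _ _ _ _ (by simp [hA])]
    simp [hA, show r - (r - 1) = 1 by omega]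
  · have hlt : i - (r + 1) < (B.sort (· ≤ ·)).length := by
      rw [Finset.length_sort, hB]
      omega
    rw [List.getD_append_right _ _ _ _ (by rw [Finset.length_sort, hA]; omega),
      Finset.length_sort, hA, show i - (r - 1) = i - (r + 1) + 2 by omega, List.getD_cons_succ,
      List.getD_cons_succ, List.getD_eq_getElem _ _ hlt]
    exact (B.mem_sort _).1 (List.getElem_mem _)

theorem containsCopy_genTriangle_of_labelling (hr : 2 ≤ r) {F : RGraph r} {A B : Finset ℕ}
    {x y : ℕ} {f : ℕ → ℕ} (hinj : Set.InjOn f (Set.Iio (2 * r - 1))) (hfA : ∀ i < r - 1, f i ∈ A)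
    (hfx : f (r - 1) = x) (hfy : f r = y) (hfB : ∀ i, r < i → i < 2 * r - 1 → f i ∈ B)
    (h₁ : insert x A ∈ F.edges) (h₂ : insert y A ∈ F.edges)
    (h₃ : insert x (insert y B) ∈ F.edges) : ContainsCopy F (genTriangle r) := by
  have himage : ∀ D ⊆ Finset.range (2 * r - 1), D.card = r → ∀ e ∈ F.edges,
      (∀ i ∈ D, f i ∈ e) → D.image f ∈ F.edges := by
    intro D hD hDr e he hDe
    rwa [image_eq_of_mapsTo_of_card_le (hinj.mono fun v hv => Finset.mem_range.1 (hD hv)) hDe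
      (by rw [F.uniform e he, hDr])]
  refine ⟨f, hinj, fun v hv => ?_, fun D hD => ?_⟩
  · change v < 2 * r - 1 at hv
    rcases lt_trichotomy v (r - 1) with hv' | rfl | hv'
    · exact F.valid _ h₁ _ (Finset.mem_insert_of_mem (hfA v hv'))
    · exact F.valid _ h₁ _ (hfx ▸ Finset.mem_insert_self x A)
    · obtain rfl | hv' : v = r ∨ r < v := by omega
      · exact F.valid _ h₂ _ (hfy ▸ Finset.mem_insert_self y A)
      · exact F.valid _ h₃ _ (by simp [hfB v hv' hv])
  simp only [genTriangle, dif_pos hr, Finset.mem_insert, Finset.mem_singleton] at hD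
  rcases hD with rfl | rfl | rfl
  · refine himage _ (Finset.range_subset_range.2 (by omega)) (Finset.card_range r) _ h₁ ?_
    intro i hi
    obtain hi | rfl : i < r - 1 ∨ i = r - 1 := by
      have := Finset.mem_range.1 hi
      omega
    · exact Finset.mem_insert_of_mem (hfA i hi)
    · exact hfx ▸ Finset.mem_insert_self x A
  · refine himage _ (fun i hi => ?_) ?_ _ h₂ ?_
    · simp only [Finset.mem_insert, Finset.mem_range] at hi ⊢
      omega
    · rw [Finset.card_insert_of_notMem (by simp), Finset.card_range]
      omega
    · intro i hi
      obtain rfl | hi : i = r ∨ i < r - 1 := by simpa using hi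
      · exact hfy ▸ Finset.mem_insert_self y A
      · exact Finset.mem_insert_of_mem (hfA i hi)
  · refine himage _ (fun i hi => ?_) (by rw [Nat.card_Ico]; omega) _ h₃ fun i hi => ?_
    · exact Finset.mem_range.2 (Finset.mem_Ico.1 hi).2
    obtain ⟨hi₁, hi'⟩ := Finset.mem_Ico.1 hi
    obtain rfl | rfl | hri : i = r - 1 ∨ i = r ∨ r < i := by omega
    · simp [hfx]
    · simp [hfy]
    · simp [hfB i hri hi']

theorem containsCopy_genTriangle_of_edges (hr : 2 ≤ r) {F : RGraph r} {e₁ e₂ e₃ : Finset ℕ}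
    (h₁ : e₁ ∈ F.edges) (h₂ : e₂ ∈ F.edges) (h₃ : e₃ ∈ F.edges) (hc : (e₁ ∩ e₂).card = r - 1)
    (hsub : symmDiff e₁ e₂ ⊆ e₃) (hdisj : Disjoint (e₁ ∩ e₂) e₃) :
    ContainsCopy F (genTriangle r) := by
  obtain ⟨x, y, hxy, hxA, hyA, he₁, he₂, hsd⟩ :=
    exists_eq_insert_inter_of_mem_edges (by omega) h₁ h₂ hc
  have hxy₃ : {x, y} ⊆ e₃ := hsd ▸ hsub
  have he₃ : insert x (insert y (e₃ \ {x, y})) = e₃ := by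
    ext a
    simp only [Finset.mem_insert, Finset.mem_sdiff, Finset.mem_singleton]
    grind [Finset.insert_subset_iff]
  have hB : (e₃ \ {x, y}).card = r - 2 := by
    rw [Finset.card_sdiff_of_subset hxy₃, F.uniform e₃ h₃, Finset.card_pair hxy]
  obtain ⟨f, hinj, hfA, hfx, hfy, hfB⟩ := exists_genTriangle_labelling hr hc hB hxy
    (by simp [hxA]) (by simp [hyA]) (hdisj.mono_right Finset.sdiff_subset)
  exact containsCopy_genTriangle_of_labelling hr hinj hfA hfx hfy hfB (he₁ ▸ h₁) (he₂ ▸ h₂)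
    (by rwa [he₃])

def IsSigmaPair (F : RGraph r) (p : Finset ℕ) : Prop :=
  ∃ e₁ ∈ F.edges, ∃ e₂ ∈ F.edges, (e₁ ∩ e₂).card = r - 1 ∧ symmDiff e₁ e₂ = p

def ContainsSigmaPair (F : RGraph r) (e : Finset ℕ) : Prop :=
  ∃ p, IsSigmaPair F p ∧ p ⊆ e

theorem IsSigmaPair.card_eq_two (hr : 1 ≤ r) {F : RGraph r} {p : Finset ℕ}
    (hp : IsSigmaPair F p) : p.card = 2 := by
  obtain ⟨e₁, h₁, e₂, h₂, hc, rfl⟩ := hp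
  obtain ⟨x, y, hxy, -, -, -, -, hsd⟩ := exists_eq_insert_inter_of_mem_edges hr h₁ h₂ hc
  rw [hsd, Finset.card_pair hxy]

theorem exists_core_of_isSigmaPair (hr : 2 ≤ r) {F : RGraph r}
    (hT : ¬ ContainsCopy F (genTriangle r)) {p : Finset ℕ} (hp : IsSigmaPair F p) :
    ∃ A : Finset ℕ, A.card = r - 1 ∧ Disjoint A p ∧ ∀ e ∈ F.edges, p ⊆ e → ¬ Disjoint A e := by
  obtain ⟨e₁, h₁, e₂, h₂, hc, rfl⟩ := hp
  exact ⟨e₁ ∩ e₂, hc, (disjoint_symmDiff_inf e₁ e₂).symm,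
    fun e he hpe hdisj => hT (containsCopy_genTriangle_of_edges hr h₁ h₂ he hc hpe hdisj)⟩

theorem freeFam_sigmaFam_of_forall_not_containsSigmaPair {G : RGraph r}
    (hG : ∀ e ∈ G.edges, ¬ ContainsSigmaPair G e) : FreeFam (SigmaFam r) G := by
  rintro H ⟨D₁, D₂, D₃, hH, -, -, -, hcard, hsub⟩ ⟨f, hf, -, hmap⟩
  have h₁ : D₁ ∈ H.edges := by simp [hH]
  have h₂ : D₂ ∈ H.edges := by simp [hH]
  have h₃ : D₃ ∈ H.edges := by simp [hH]
  have hinj : Set.InjOn f (D₁ ∪ D₂ : Set ℕ) := hf.mono fun v hv => by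
    rcases hv with hv | hv
    · exact H.valid D₁ h₁ v hv
    · exact H.valid D₂ h₂ v hv
  refine hG _ (hmap _ h₃) ⟨_, ⟨_, hmap _ h₁, _, hmap _ h₂, ?_, rfl⟩, ?_⟩
  · rw [← Finset.image_inter_of_injOn _ _ hinj, Finset.card_image_of_injOn
      (hinj.mono fun _ hv => Or.inl (Finset.mem_inter.1 hv).1), hcard]
  · exact (symmDiff_image_subset_image_symmDiff f D₁ D₂).trans (Finset.image_subset_image hsub)

theorem card_filter_superset_le (F : RGraph r) (s : Finset ℕ) :
    (F.edges.filter (s ⊆ ·)).card ≤ F.n.choose (r - s.card) := by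
  rw [← Finset.card_range F.n, ← Finset.card_powersetCard]
  refine Finset.card_le_card_of_injOn (· \ s) (fun e he => ?_) (fun e₁ he₁ e₂ he₂ h => ?_)
  · obtain ⟨he, hse⟩ := Finset.mem_filter.1 he
    refine Finset.mem_powersetCard.2 ⟨fun v hv => ?_, ?_⟩
    · exact Finset.mem_range.2 (F.valid e he v (Finset.sdiff_subset hv))
    · rw [Finset.card_sdiff_of_subset hse, F.uniform e he]
  · rw [← Finset.sdiff_union_of_subset (Finset.mem_filter.1 he₁).2,
      ← Finset.sdiff_union_of_subset (Finset.mem_filter.1 he₂).2]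
    exact congrArg (· ∪ s) h

open Classical in
theorem card_filter_containsSigmaPair_le (hr : 3 ≤ r) {F : RGraph r}
    (hT : ¬ ContainsCopy F (genTriangle r)) :
    (F.edges.filter (ContainsSigmaPair F)).card ≤ (r - 1) * F.n ^ (r - 1) := by
  choose! core hcore using fun p (hp : IsSigmaPair F p) =>
    exists_core_of_isSigmaPair (by omega) hT hp
  set pairs := ((Finset.range F.n).powersetCard 2).filter (IsSigmaPair F)
  have hcover : F.edges.filter (ContainsSigmaPair F) ⊆
      pairs.biUnion fun p => (core p).biUnion fun a => F.edges.filter (insert a p ⊆ ·) := by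
    intro e he
    obtain ⟨he, p, hp, hpe⟩ := Finset.mem_filter.1 he
    obtain ⟨a, haA, hae⟩ := Finset.not_disjoint_iff.1 ((hcore p hp).2.2 e he hpe)
    simp only [pairs, Finset.mem_biUnion, Finset.mem_filter, Finset.mem_powersetCard]
    exact ⟨p, ⟨⟨fun v hv => Finset.mem_range.2 (F.valid e he v (hpe hv)),
      hp.card_eq_two (by omega)⟩, hp⟩, a, haA, he, Finset.insert_subset hae hpe⟩
  have hcodeg : ∀ p ∈ pairs, ∀ a ∈ core p,
      (F.edges.filter (insert a p ⊆ ·)).card ≤ F.n.choose (r - 3) := by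
    intro p hp a ha
    obtain ⟨-, hdisj, -⟩ := hcore p (Finset.mem_filter.1 hp).2
    have hcard : (insert a p).card = 3 := by
      rw [Finset.card_insert_of_notMem (Finset.disjoint_left.1 hdisj ha),
        (Finset.mem_powersetCard.1 (Finset.mem_filter.1 hp).1).2]
    simpa [hcard] using card_filter_superset_le F (insert a p)
  calc _ ≤ _ := Finset.card_le_card hcover
    _ ≤ pairs.card * ((r - 1) * F.n.choose (r - 3)) := by
      refine Finset.card_biUnion_le_card_mul _ _ _ fun p hp => ?_
      rw [← (hcore p (Finset.mem_filter.1 hp).2).1]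
      exact Finset.card_biUnion_le_card_mul _ _ _ (hcodeg p hp)
    _ ≤ F.n ^ 2 * ((r - 1) * F.n ^ (r - 3)) := by
      have hpairs : pairs.card ≤ F.n.choose 2 := by
        simpa using Finset.card_filter_le ((Finset.range F.n).powersetCard 2) (IsSigmaPair F)
      gcongr
      · exact hpairs.trans (Nat.choose_le_pow _ _)
      · exact Nat.choose_le_pow _ _
    _ = (r - 1) * F.n ^ (r - 1) := by
      obtain ⟨k, rfl⟩ : ∃ k, r = k + 3 := ⟨r - 3, by omega⟩
      simp only [Nat.add_sub_cancel, show k + 3 - 1 = k + 2 by omega]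
      ring

open Classical in
noncomputable def sigmaFreeSubgraph (F : RGraph r) : RGraph r where
  n := F.n
  edges := F.edges.filter fun e => ¬ ContainsSigmaPair F e
  uniform e he := F.uniform e (Finset.mem_filter.1 he).1
  valid e he := F.valid e (Finset.mem_filter.1 he).1

theorem freeFam_sigmaFreeSubgraph (F : RGraph r) : FreeFam (SigmaFam r) (sigmaFreeSubgraph F) := by
  classical
  refine freeFam_sigmaFam_of_forall_not_containsSigmaPair
    fun e he ⟨p, ⟨e₁, h₁, e₂, h₂, hp⟩, hpe⟩ => ?_
  exact (Finset.mem_filter.1 he).2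
    ⟨p, ⟨e₁, (Finset.mem_filter.1 h₁).1, e₂, (Finset.mem_filter.1 h₂).1, hp⟩, hpe⟩

/-- For `r ≥ 3` and every `ε > 0` there is `n0` such that every `T_r`-free
`r`-graph `F` on `n ≥ n0` vertices has a `Σ_r`-free subgraph `F̂ ⊆ F` with
`|F̂| ≥ |F| - ε n^r`. -/
theorem sigma_free_subgraph (r : ℕ) (hr : 3 ≤ r) :
    ∀ ε > (0 : ℝ), ∃ n0 : ℕ, ∀ F : RGraph r, n0 ≤ F.n →
      ¬ ContainsCopy F (genTriangle r) →
      ∃ Fh : RGraph r, Fh.n = F.n ∧ Fh.edges ⊆ F.edges ∧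
        FreeFam (SigmaFam r) Fh ∧
        (F.edges.card : ℝ) - ε * (F.n : ℝ) ^ r ≤ (Fh.edges.card : ℝ) := by
  classical
  intro ε hε
  refine ⟨⌈r / ε⌉₊, fun F hn hT => ⟨sigmaFreeSubgraph F, rfl, Finset.filter_subset _ _,
    freeFam_sigmaFreeSubgraph F, ?_⟩⟩
  have hrn : (r : ℝ) ≤ ε * F.n := by
    rw [mul_comm, ← div_le_iff₀ hε]
    exact Nat.ceil_le.1 hn
  have hdel : ((F.edges.filter (ContainsSigmaPair F)).card : ℝ) ≤ ε * F.n ^ r :=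
    calc _ ≤ (((r - 1) * F.n ^ (r - 1) : ℕ) : ℝ) := by
          exact_mod_cast card_filter_containsSigmaPair_le hr hT
      _ ≤ r * F.n ^ (r - 1) := by push_cast; gcongr; exact_mod_cast Nat.sub_le r 1
      _ ≤ ε * F.n * F.n ^ (r - 1) := by gcongr
      _ = ε * F.n ^ r := by rw [mul_assoc, ← pow_succ', Nat.sub_add_cancel (by omega)]
  have hsplit := Finset.card_filter_add_card_filter_not (s := F.edges) (ContainsSigmaPair F)
  have : ((sigmaFreeSubgraph F).edges.card : ℝ) + (F.edges.filter (ContainsSigmaPair F)).card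
      = F.edges.card := by exact_mod_cast (add_comm _ _).trans hsplit
  linarith

end TuranGT
end
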